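/- Let 𝓛 be a summable symmetric monoidal category, with strength φ¹_{X₁,X₂} ∈ 𝓛(S(X₁)⊗X₂, S(X₁⊗X₂)) (characterized by π_i∘φ¹ = π_i⊗id) and φ²_{X₁,X₂} = S(sym)∘φ¹_{X₂,X₁}∘sym ∈ 𝓛(X₁⊗S(X₂), S(X₁⊗X₂)). Then: (1) φ¹∘(ι₀⊗id_{X₂}) = ι₀_{X₁⊗X₂}; (2) τ_{X₁⊗X₂}∘S(φ¹_{X₁,X₂})∘φ¹_{S X₁,X₂} = φ¹_{X₁,X₂}∘(τ_{X₁}⊗id_{X₂}); (3) c_{X₁⊗X₂}∘S(φ²_{X₁,X₂})∘φ¹_{X₁,S X₂} = S(φ¹_{X₁,X₂})∘φ²_{S X₁,X₂}, where c is the flip on S² and τ the monad multiplication. Consequently (S, ι₀, τ) equipped with φ¹ is a commutative strong monad: τ∘S(φ¹)∘φ²_{S X₁,X₂} = τ∘S(φ²)∘φ¹_{X₁,S X₂}. -/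

import Mathlib

open CategoryTheory Limits MonoidalCategory

universe v u

/-- A pre-summability structure on a category with zero morphisms: a functor `S`
together with jointly monic natural transformations `π₀, π₁ : S ⟶ 𝟭 C` and a
natural transformation `σ : S ⟶ 𝟭 C`. -/
structure PreSummability (C : Type u) [Category.{v} C] [HasZeroMorphisms C] where
  S : C ⥤ C
  π0 : S ⟶ 𝟭 C
  π1 : S ⟶ 𝟭 C
  σ : S ⟶ 𝟭 C
  jointly_monic : ∀ {Y X : C} (f g : Y ⟶ S.obj X),
    f ≫ π0.app X = g ≫ π0.app X → f ≫ π1.app X = g ≫ π1.app X → f = g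

namespace PreSummability

variable {C : Type u} [Category.{v} C] [HasZeroMorphisms C] (P : PreSummability C)

/-- Two morphisms are summable when they admit a (necessarily unique) witness. -/
def Summable {Y X : C} (f₀ f₁ : Y ⟶ X) : Prop :=
  ∃ h : Y ⟶ P.S.obj X, h ≫ P.π0.app X = f₀ ∧ h ≫ P.π1.app X = f₁

/-- The witness `⟨f₀, f₁⟩` of a summable pair (an arbitrary value if the pair is
not summable). -/
noncomputable def witness {Y X : C} (f₀ f₁ : Y ⟶ X) : Y ⟶ P.S.obj X :=
  @dite _ (P.Summable f₀ f₁) (Classical.propDecidable _) (fun h => h.choose) (fun _ => 0)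

/-- The sum `f₀ + f₁ = σ ∘ ⟨f₀, f₁⟩` of a summable pair. -/
noncomputable def sum {Y X : C} (f₀ f₁ : Y ⟶ X) : Y ⟶ X :=
  P.witness f₀ f₁ ≫ P.σ.app X

/-- Projections indexed by a boolean. -/
def pr (i : Bool) : P.S ⟶ 𝟭 C := if i then P.π1 else P.π0

/-- Axiom (S-com): `π₁` and `π₀` are summable with `π₁ + π₀ = σ`. -/
def SCom : Prop := ∀ X : C,
  P.Summable (P.π1.app X) (P.π0.app X) ∧ P.sum (P.π1.app X) (P.π0.app X) = P.σ.app X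

/-- Axiom (S-zero): `0` and `id` are summable with `0 + id = id`. -/
def SZero : Prop := ∀ X : C,
  P.Summable (0 : X ⟶ X) (𝟙 X) ∧ P.sum (0 : X ⟶ X) (𝟙 X) = 𝟙 X

/-- Axiom (S-wit): if `σ∘f₀` and `σ∘f₁` are summable then `f₀` and `f₁` are summable. -/
def SWit : Prop := ∀ (X Y : C) (f₀ f₁ : X ⟶ P.S.obj Y),
  P.Summable (f₀ ≫ P.σ.app Y) (f₁ ≫ P.σ.app Y) → P.Summable f₀ f₁

end PreSummability

section Monoidal

variable {C : Type u} [Category.{v} C] [HasZeroMorphisms C] [MonoidalCategory C]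

/-- The tensor product of zero morphisms is zero. -/
def TensorZero (C : Type u) [Category.{v} C] [HasZeroMorphisms C]
    [MonoidalCategory C] : Prop :=
  ∀ {X Y U V : C} (f : U ⟶ V),
    ((0 : X ⟶ Y) ⊗ₘ f) = 0 ∧ (f ⊗ₘ (0 : X ⟶ Y)) = 0

/-- Axiom (S-⊗): if `f₀` and `f₁` are summable then so are `f₀ ⊗ g` and `f₁ ⊗ g`,
with `(f₀ + f₁) ⊗ g = f₀ ⊗ g + f₁ ⊗ g`. -/
def PreSummability.STens (P : PreSummability C) : Prop :=
  ∀ {X Y U V : C} (f₀ f₁ : X ⟶ Y) (g : U ⟶ V), P.Summable f₀ f₁ →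
    P.Summable (f₀ ⊗ₘ g) (f₁ ⊗ₘ g) ∧ (P.sum f₀ f₁ ⊗ₘ g) = P.sum (f₀ ⊗ₘ g) (f₁ ⊗ₘ g)

end Monoidal

/-!
All identities are checked componentwise, since `π₀, π₁` are jointly monic, using
`π_i ∘ φ¹ = π_i ⊗ id` and `π_i ∘ φ² = id ⊗ π_i`. The only non-formal component is `π₁ ∘ τ`,
a sum: pushing it through `φ¹` needs the antidiagonal pair `(π₀π₁, π₁π₀)` to be summable, which
follows from (S-com) and (S-wit), and (S-⊗) to pull the sum out of `- ⊗ id`. Commutativity then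
follows from (3), because `τ ∘ c = τ` by commutativity of sums.
-/

namespace PreSummability

variable {C : Type u} [Category.{v} C] [HasZeroMorphisms C] (P : PreSummability C)

@[simp] lemma pr_false : P.pr false = P.π0 := rfl

@[simp] lemma pr_true : P.pr true = P.π1 := rfl

lemma map_comp_pr (i : Bool) {X X' : C} (f : X ⟶ X') :
    P.S.map f ≫ (P.pr i).app X' = (P.pr i).app X ≫ f :=
  (P.pr i).naturality f

lemma hom_ext {Y X : C} {f g : Y ⟶ P.S.obj X}
    (h : ∀ i, f ≫ (P.pr i).app X = g ≫ (P.pr i).app X) : f = g :=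
  P.jointly_monic f g (h false) (h true)

lemma hom_ext₂ {Y X : C} {f g : Y ⟶ P.S.obj (P.S.obj X)}
    (h : ∀ i j, f ≫ (P.pr j).app (P.S.obj X) ≫ (P.pr i).app X =
      g ≫ (P.pr j).app (P.S.obj X) ≫ (P.pr i).app X) : f = g :=
  P.hom_ext fun j => P.hom_ext fun i => by simpa only [Category.assoc] using h i j

lemma witness_spec {Y X : C} {f₀ f₁ : Y ⟶ X} (h : P.Summable f₀ f₁) :
    P.witness f₀ f₁ ≫ P.π0.app X = f₀ ∧ P.witness f₀ f₁ ≫ P.π1.app X = f₁ := by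
  rw [witness, dif_pos h]
  exact h.choose_spec

lemma witness_eq {Y X : C} {f₀ f₁ : Y ⟶ X} {w : Y ⟶ P.S.obj X}
    (h₀ : w ≫ P.π0.app X = f₀) (h₁ : w ≫ P.π1.app X = f₁) : P.witness f₀ f₁ = w :=
  have spec := P.witness_spec ⟨w, h₀, h₁⟩
  P.jointly_monic _ _ (spec.1.trans h₀.symm) (spec.2.trans h₁.symm)

lemma sum_eq_comp_σ {Y X : C} {f₀ f₁ : Y ⟶ X} {w : Y ⟶ P.S.obj X}
    (h₀ : w ≫ P.π0.app X = f₀) (h₁ : w ≫ P.π1.app X = f₁) :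
    P.sum f₀ f₁ = w ≫ P.σ.app X := by
  rw [sum, P.witness_eq h₀ h₁]

lemma sum_comp_left {Y' Y X : C} (g : Y' ⟶ Y) {f₀ f₁ : Y ⟶ X} (h : P.Summable f₀ f₁) :
    P.sum (g ≫ f₀) (g ≫ f₁) = g ≫ P.sum f₀ f₁ := by
  obtain ⟨w, h₀, h₁⟩ := h
  rw [P.sum_eq_comp_σ h₀ h₁, P.sum_eq_comp_σ (w := g ≫ w) (by simp [h₀]) (by simp [h₁]),
    Category.assoc]

lemma exists_swap (hcom : P.SCom) (X : C) : ∃ s : P.S.obj X ⟶ P.S.obj X,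
    s ≫ P.π0.app X = P.π1.app X ∧ s ≫ P.π1.app X = P.π0.app X ∧ s ≫ P.σ.app X = P.σ.app X := by
  obtain ⟨⟨s, s₀, s₁⟩, hσ⟩ := hcom X
  exact ⟨s, s₀, s₁, (P.sum_eq_comp_σ s₀ s₁).symm.trans hσ⟩

lemma Summable.symm {P : PreSummability C} (hcom : P.SCom) {Y X : C} {f₀ f₁ : Y ⟶ X}
    (h : P.Summable f₀ f₁) : P.Summable f₁ f₀ := by
  obtain ⟨w, h₀, h₁⟩ := h
  obtain ⟨s, s₀, s₁, -⟩ := P.exists_swap hcom X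
  exact ⟨w ≫ s, by rw [Category.assoc, s₀, h₁], by rw [Category.assoc, s₁, h₀]⟩

lemma sum_comm (hcom : P.SCom) {Y X : C} {f₀ f₁ : Y ⟶ X} (h : P.Summable f₀ f₁) :
    P.sum f₁ f₀ = P.sum f₀ f₁ := by
  obtain ⟨w, h₀, h₁⟩ := h
  obtain ⟨s, s₀, s₁, sσ⟩ := P.exists_swap hcom X
  rw [P.sum_eq_comp_σ h₀ h₁,
    P.sum_eq_comp_σ (w := w ≫ s) (by rw [Category.assoc, s₀, h₁]) (by rw [Category.assoc, s₁, h₀]),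
    Category.assoc, sσ]

/- `S(σ)` witnesses `(π₀ ≫ σ, π₁ ≫ σ)` and `σ` is invariant under the swap, so (S-wit) applies
to `(π₀ ≫ swap, π₁)`; composing its witness with `S(π₀)` gives the antidiagonal, swapped. -/
lemma summable_antidiag (hcom : P.SCom) (hwit : P.SWit) (X : C) :
    P.Summable (P.π1.app (P.S.obj X) ≫ P.π0.app X) (P.π0.app (P.S.obj X) ≫ P.π1.app X) := by
  obtain ⟨s, s₀, -, sσ⟩ := P.exists_swap hcom X
  obtain ⟨H, H₀, H₁⟩ := hwit _ _ (P.π0.app (P.S.obj X) ≫ s) (P.π1.app (P.S.obj X))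
    ⟨P.S.map (P.σ.app X), by rw [Category.assoc, sσ]; exact P.π0.naturality _,
      P.π1.naturality _⟩
  refine Summable.symm hcom ⟨H ≫ P.S.map (P.π0.app X), ?_, ?_⟩
  · rw [Category.assoc, P.π0.naturality, ← Category.assoc, H₀, Category.assoc, Functor.id_map, s₀]
  · rw [Category.assoc, P.π1.naturality, ← Category.assoc, H₁, Functor.id_map]

def IsFlip (c : ∀ X : C, P.S.obj (P.S.obj X) ⟶ P.S.obj (P.S.obj X)) : Prop :=
  ∀ (X : C) (i j : Bool),
    c X ≫ (P.pr j).app (P.S.obj X) ≫ (P.pr i).app X = (P.pr i).app (P.S.obj X) ≫ (P.pr j).app X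

lemma flip_comp_mult (hcom : P.SCom) (hwit : P.SWit)
    {τ : ∀ X : C, P.S.obj (P.S.obj X) ⟶ P.S.obj X}
    (hτ0 : ∀ X : C, τ X ≫ P.π0.app X = P.π0.app (P.S.obj X) ≫ P.π0.app X)
    (hτ1 : ∀ X : C, τ X ≫ P.π1.app X =
      P.sum (P.π1.app (P.S.obj X) ≫ P.π0.app X) (P.π0.app (P.S.obj X) ≫ P.π1.app X))
    {c : ∀ X : C, P.S.obj (P.S.obj X) ⟶ P.S.obj (P.S.obj X)} (hc : P.IsFlip c) (X : C) :
    c X ≫ τ X = τ X := by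
  refine P.hom_ext fun i => ?_
  have hc₀₀ := hc X false false
  have hc₀₁ := hc X false true
  have hc₁₀ := hc X true false
  simp only [pr_false, pr_true] at hc₀₀ hc₀₁ hc₁₀
  cases i
  · rw [pr_false, Category.assoc, hτ0, hc₀₀]
  · rw [pr_true, Category.assoc, hτ1, ← P.sum_comp_left _ (P.summable_antidiag hcom hwit X),
      hc₀₁, hc₁₀, P.sum_comm hcom (P.summable_antidiag hcom hwit X)]

variable [MonoidalCategory C]

def IsStrength (φ : ∀ X₁ X₂ : C, P.S.obj X₁ ⊗ X₂ ⟶ P.S.obj (X₁ ⊗ X₂)) : Prop :=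
  ∀ (X₁ X₂ : C) (i : Bool), φ X₁ X₂ ≫ (P.pr i).app (X₁ ⊗ X₂) = ((P.pr i).app X₁ ⊗ₘ 𝟙 X₂)

def IsCostrength (φ₂ : ∀ X₁ X₂ : C, X₁ ⊗ P.S.obj X₂ ⟶ P.S.obj (X₁ ⊗ X₂)) : Prop :=
  ∀ (X₁ X₂ : C) (i : Bool), φ₂ X₁ X₂ ≫ (P.pr i).app (X₁ ⊗ X₂) = 𝟙 X₁ ⊗ₘ (P.pr i).app X₂

lemma unit_tensorHom_id_comp_strength (htz : TensorZero C) {ι : ∀ X : C, X ⟶ P.S.obj X}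
    (hι0 : ∀ X : C, ι X ≫ P.π0.app X = 𝟙 X) (hι1 : ∀ X : C, ι X ≫ P.π1.app X = 0)
    {φ : ∀ X₁ X₂ : C, P.S.obj X₁ ⊗ X₂ ⟶ P.S.obj (X₁ ⊗ X₂)} (hφ : P.IsStrength φ) (X₁ X₂ : C) :
    (ι X₁ ⊗ₘ 𝟙 X₂) ≫ φ X₁ X₂ = ι (X₁ ⊗ X₂) := by
  refine P.hom_ext fun i => ?_
  rw [Category.assoc, hφ, ← comp_tensor_id]
  cases i
  · simp [hι0]
  · simp [hι1, (htz _).1]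

lemma strength_comp_map_strength_comp_pr_pr
    {φ : ∀ X₁ X₂ : C, P.S.obj X₁ ⊗ X₂ ⟶ P.S.obj (X₁ ⊗ X₂)} (hφ : P.IsStrength φ) (X₁ X₂ : C) (i j : Bool) :
    φ (P.S.obj X₁) X₂ ≫ P.S.map (φ X₁ X₂) ≫ (P.pr j).app (P.S.obj (X₁ ⊗ X₂)) ≫
      (P.pr i).app (X₁ ⊗ X₂) = ((P.pr j).app (P.S.obj X₁) ≫ (P.pr i).app X₁) ⊗ₘ 𝟙 X₂ := by
  rw [← Category.assoc (P.S.map _), map_comp_pr, Category.assoc, hφ, ← Category.assoc, hφ,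
    comp_tensor_id]

lemma strength_comp_map_strength_comp_mult (hcom : P.SCom) (hwit : P.SWit) (htens : P.STens)
    {τ : ∀ X : C, P.S.obj (P.S.obj X) ⟶ P.S.obj X}
    (hτ0 : ∀ X : C, τ X ≫ P.π0.app X = P.π0.app (P.S.obj X) ≫ P.π0.app X)
    (hτ1 : ∀ X : C, τ X ≫ P.π1.app X =
      P.sum (P.π1.app (P.S.obj X) ≫ P.π0.app X) (P.π0.app (P.S.obj X) ≫ P.π1.app X))
    {φ : ∀ X₁ X₂ : C, P.S.obj X₁ ⊗ X₂ ⟶ P.S.obj (X₁ ⊗ X₂)} (hφ : P.IsStrength φ) (X₁ X₂ : C) :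
    φ (P.S.obj X₁) X₂ ≫ P.S.map (φ X₁ X₂) ≫ τ (X₁ ⊗ X₂) = (τ X₁ ⊗ₘ 𝟙 X₂) ≫ φ X₁ X₂ := by
  have key₀₀ := P.strength_comp_map_strength_comp_pr_pr hφ X₁ X₂ false false
  have key₀₁ := P.strength_comp_map_strength_comp_pr_pr hφ X₁ X₂ false true
  have key₁₀ := P.strength_comp_map_strength_comp_pr_pr hφ X₁ X₂ true false
  simp only [pr_false, pr_true] at key₀₀ key₀₁ key₁₀
  refine P.hom_ext fun i => ?_
  rw [Category.assoc _ (φ X₁ X₂), hφ, ← comp_tensor_id]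
  cases i
  · rw [pr_false, Category.assoc, Category.assoc, hτ0, key₀₀, hτ0]
  · rw [pr_true, Category.assoc, Category.assoc, hτ1, ← Category.assoc,
      ← P.sum_comp_left _ (P.summable_antidiag hcom hwit _), Category.assoc, Category.assoc,
      key₀₁, key₁₀, ← (htens _ _ _ (P.summable_antidiag hcom hwit X₁)).2, hτ1]

lemma isCostrength_of_braiding [SymmetricCategory C]
    {φ : ∀ X₁ X₂ : C, P.S.obj X₁ ⊗ X₂ ⟶ P.S.obj (X₁ ⊗ X₂)} (hφ : P.IsStrength φ)
    {φ₂ : ∀ X₁ X₂ : C, X₁ ⊗ P.S.obj X₂ ⟶ P.S.obj (X₁ ⊗ X₂)}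
    (hφ₂ : ∀ X₁ X₂ : C,
      φ₂ X₁ X₂ = (β_ X₁ (P.S.obj X₂)).hom ≫ φ X₂ X₁ ≫ P.S.map (β_ X₂ X₁).hom)
    : P.IsCostrength φ₂ := by
  intro X₁ X₂ i
  rw [hφ₂, Category.assoc, Category.assoc, map_comp_pr, ← Category.assoc (φ X₂ X₁), hφ]
  simp

lemma strength_comp_map_costrength_comp_flip
    {φ : ∀ X₁ X₂ : C, P.S.obj X₁ ⊗ X₂ ⟶ P.S.obj (X₁ ⊗ X₂)} (hφ : P.IsStrength φ)
    {φ₂ : ∀ X₁ X₂ : C, X₁ ⊗ P.S.obj X₂ ⟶ P.S.obj (X₁ ⊗ X₂)} (hφ₂ : P.IsCostrength φ₂)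
    {c : ∀ X : C, P.S.obj (P.S.obj X) ⟶ P.S.obj (P.S.obj X)} (hc : P.IsFlip c) (X₁ X₂ : C) :
    φ X₁ (P.S.obj X₂) ≫ P.S.map (φ₂ X₁ X₂) ≫ c (X₁ ⊗ X₂) =
      φ₂ (P.S.obj X₁) X₂ ≫ P.S.map (φ X₁ X₂) := by
  refine P.hom_ext₂ fun i j => ?_
  rw [Category.assoc, Category.assoc, hc, ← Category.assoc (P.S.map _), map_comp_pr,
    Category.assoc, hφ₂, ← Category.assoc, hφ, Category.assoc, ← Category.assoc (P.S.map _),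
    map_comp_pr, Category.assoc, hφ, ← Category.assoc, hφ₂]
  simp [whisker_exchange]

end PreSummability

open PreSummability

theorem stmt17_general {C : Type u} [Category.{v} C] [HasZeroMorphisms C]
    [MonoidalCategory C] [SymmetricCategory C] (htz : TensorZero C)
    (P : PreSummability C) (hcom : P.SCom) (hwit : P.SWit)
    (htens : P.STens)
    -- the unit `ι₀ = ⟨id, 0⟩`
    (ι : ∀ X : C, X ⟶ P.S.obj X)
    (hι0 : ∀ X : C, ι X ≫ P.π0.app X = 𝟙 X)
    (hι1 : ∀ X : C, ι X ≫ P.π1.app X = 0)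
    -- the monad multiplication `τ`
    (τ : ∀ X : C, P.S.obj (P.S.obj X) ⟶ P.S.obj X)
    (hτ0 : ∀ X : C, τ X ≫ P.π0.app X = P.π0.app (P.S.obj X) ≫ P.π0.app X)
    (hτ1 : ∀ X : C, τ X ≫ P.π1.app X =
      P.sum (P.π1.app (P.S.obj X) ≫ P.π0.app X) (P.π0.app (P.S.obj X) ≫ P.π1.app X))
    -- the flip `c` on `S²`
    (c : ∀ X : C, P.S.obj (P.S.obj X) ⟶ P.S.obj (P.S.obj X))
    (hc : ∀ (X : C) (i j : Bool),
      c X ≫ (P.pr j).app (P.S.obj X) ≫ (P.pr i).app X =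
        (P.pr i).app (P.S.obj X) ≫ (P.pr j).app X)
    -- the strength `φ¹`, characterized by `π_i ∘ φ¹ = π_i ⊗ id`
    (φ : ∀ X₁ X₂ : C, P.S.obj X₁ ⊗ X₂ ⟶ P.S.obj (X₁ ⊗ X₂))
    (hφ : ∀ (X₁ X₂ : C) (i : Bool),
      φ X₁ X₂ ≫ (P.pr i).app (X₁ ⊗ X₂) = ((P.pr i).app X₁ ⊗ₘ 𝟙 X₂))
    -- the strength `φ² = S(sym) ∘ φ¹ ∘ sym`
    (φ₂ : ∀ X₁ X₂ : C, X₁ ⊗ P.S.obj X₂ ⟶ P.S.obj (X₁ ⊗ X₂))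
    (hφ₂ : ∀ X₁ X₂ : C,
      φ₂ X₁ X₂ = (β_ X₁ (P.S.obj X₂)).hom ≫ φ X₂ X₁ ≫ P.S.map (β_ X₂ X₁).hom) :
    -- (1) compatibility with the unit
    (∀ X₁ X₂ : C, ((ι X₁ ⊗ₘ 𝟙 X₂) ≫ φ X₁ X₂) = ι (X₁ ⊗ X₂)) ∧
    -- (2) compatibility with the multiplication
    (∀ X₁ X₂ : C,
      φ (P.S.obj X₁) X₂ ≫ P.S.map (φ X₁ X₂) ≫ τ (X₁ ⊗ X₂) =
        ((τ X₁ ⊗ₘ 𝟙 X₂) ≫ φ X₁ X₂)) ∧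
    -- (3) compatibility of the two strengths via the flip
    (∀ X₁ X₂ : C,
      φ X₁ (P.S.obj X₂) ≫ P.S.map (φ₂ X₁ X₂) ≫ c (X₁ ⊗ X₂) =
        φ₂ (P.S.obj X₁) X₂ ≫ P.S.map (φ X₁ X₂)) ∧
    -- consequently, `(S, ι₀, τ)` is a commutative strong monad
    (∀ X₁ X₂ : C,
      φ₂ (P.S.obj X₁) X₂ ≫ P.S.map (φ X₁ X₂) ≫ τ (X₁ ⊗ X₂) =
        φ X₁ (P.S.obj X₂) ≫ P.S.map (φ₂ X₁ X₂) ≫ τ (X₁ ⊗ X₂)) := by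
  have strength_flip := P.strength_comp_map_costrength_comp_flip hφ (P.isCostrength_of_braiding hφ hφ₂) hc
  refine ⟨P.unit_tensorHom_id_comp_strength htz hι0 hι1 hφ,
    P.strength_comp_map_strength_comp_mult hcom hwit htens hτ0 hτ1 hφ, strength_flip, fun X₁ X₂ => ?_⟩
  rw [← Category.assoc, ← strength_flip, Category.assoc, Category.assoc,
    P.flip_comp_mult hcom hwit hτ0 hτ1 hc]

theorem stmt17 {C : Type u} [Category.{v} C] [HasZeroMorphisms C]
    [MonoidalCategory C] [SymmetricCategory C] (htz : TensorZero C)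
    (P : PreSummability C) (hcom : P.SCom) (hzero : P.SZero) (hwit : P.SWit)
    (htens : P.STens)
    -- the unit `ι₀ = ⟨id, 0⟩`
    (ι : ∀ X : C, X ⟶ P.S.obj X)
    (hι0 : ∀ X : C, ι X ≫ P.π0.app X = 𝟙 X)
    (hι1 : ∀ X : C, ι X ≫ P.π1.app X = 0)
    -- the monad multiplication `τ`
    (τ : ∀ X : C, P.S.obj (P.S.obj X) ⟶ P.S.obj X)
    (hτ0 : ∀ X : C, τ X ≫ P.π0.app X = P.π0.app (P.S.obj X) ≫ P.π0.app X)
    (hτ1 : ∀ X : C, τ X ≫ P.π1.app X =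
      P.sum (P.π1.app (P.S.obj X) ≫ P.π0.app X) (P.π0.app (P.S.obj X) ≫ P.π1.app X))
    -- the flip `c` on `S²`
    (c : ∀ X : C, P.S.obj (P.S.obj X) ⟶ P.S.obj (P.S.obj X))
    (hc : ∀ (X : C) (i j : Bool),
      c X ≫ (P.pr j).app (P.S.obj X) ≫ (P.pr i).app X =
        (P.pr i).app (P.S.obj X) ≫ (P.pr j).app X)
    -- the strength `φ¹`, characterized by `π_i ∘ φ¹ = π_i ⊗ id`
    (φ : ∀ X₁ X₂ : C, P.S.obj X₁ ⊗ X₂ ⟶ P.S.obj (X₁ ⊗ X₂))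
    (hφ : ∀ (X₁ X₂ : C) (i : Bool),
      φ X₁ X₂ ≫ (P.pr i).app (X₁ ⊗ X₂) = ((P.pr i).app X₁ ⊗ₘ 𝟙 X₂))
    -- the strength `φ² = S(sym) ∘ φ¹ ∘ sym`
    (φ₂ : ∀ X₁ X₂ : C, X₁ ⊗ P.S.obj X₂ ⟶ P.S.obj (X₁ ⊗ X₂))
    (hφ₂ : ∀ X₁ X₂ : C,
      φ₂ X₁ X₂ = (β_ X₁ (P.S.obj X₂)).hom ≫ φ X₂ X₁ ≫ P.S.map (β_ X₂ X₁).hom) :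
    -- (1) compatibility with the unit
    (∀ X₁ X₂ : C, ((ι X₁ ⊗ₘ 𝟙 X₂) ≫ φ X₁ X₂) = ι (X₁ ⊗ X₂)) ∧
    -- (2) compatibility with the multiplication
    (∀ X₁ X₂ : C,
      φ (P.S.obj X₁) X₂ ≫ P.S.map (φ X₁ X₂) ≫ τ (X₁ ⊗ X₂) =
        ((τ X₁ ⊗ₘ 𝟙 X₂) ≫ φ X₁ X₂)) ∧
    -- (3) compatibility of the two strengths via the flip
    (∀ X₁ X₂ : C,
      φ X₁ (P.S.obj X₂) ≫ P.S.map (φ₂ X₁ X₂) ≫ c (X₁ ⊗ X₂) =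
        φ₂ (P.S.obj X₁) X₂ ≫ P.S.map (φ X₁ X₂)) ∧
    -- consequently, `(S, ι₀, τ)` is a commutative strong monad
    (∀ X₁ X₂ : C,
      φ₂ (P.S.obj X₁) X₂ ≫ P.S.map (φ X₁ X₂) ≫ τ (X₁ ⊗ X₂) =
        φ X₁ (P.S.obj X₂) ≫ P.S.map (φ₂ X₁ X₂) ≫ τ (X₁ ⊗ X₂)) :=
  stmt17_general htz P hcom hwit htens ι hι0 hι1 τ hτ0 hτ1 c hc φ hφ φ₂ hφ₂
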